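/- Let p and p̂ be probability vectors on {1,…,M} with all entries strictly positive, and let the channel densities f_i and output mixtures f^p, f^{p̂} be as in the context. Define g2(p) = ∑_{i=1}^M p_i ∫ f_i(y)·log( f^p(y) / (f_i(y)·p_i) ) dy and g2'(p,p̂) = ∑_{i=1}^M p_i ∫ f_i(y)·log( f^{p̂}(y) / (f_i(y)·p̂_i) ) dy. Then g2'(p,p̂) − g2(p) = ∑_{i=1}^M p_i·log(p_i / p̂_i) − ∫ f^p(y)·log( f^p(y) / f^{p̂}(y) ) dy, i.e., the surrogate gap equals the relative entropy between p and p̂ minus the relative entropy between the corresponding output mixture densities. -/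

import Mathlib

open MeasureTheory

/-- Conditional density of the post-SIC received signal given symbol `i`:
a finite Gaussian mixture over the residual multiuser-interference values `b k`
with weights `w k`, signal points `μ_i = h·α·Δ·i` and noise variance `σ²`. -/
noncomputable def condDensity (σ h α Δ : ℝ) (K : ℕ) (w b : ℕ → ℝ)
    (i : ℕ) (y : ℝ) : ℝ :=
  ∑ k ∈ Finset.Icc 1 K,
    w k * (2 * Real.pi * σ ^ 2) ^ (-(1 / 2 : ℝ)) *
      Real.exp (-(y - h * α * Δ * (i : ℝ) - b k) ^ 2 / (2 * σ ^ 2))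

/-- Output mixture density `f^q(y) = ∑ᵢ qᵢ fᵢ(y)`. -/
noncomputable def outMix (M : ℕ) (f : ℕ → ℝ → ℝ) (q : ℕ → ℝ) (y : ℝ) : ℝ :=
  ∑ i ∈ Finset.Icc 1 M, q i * f i y

/-- `g2Fun M f p q = ∑ᵢ pᵢ ∫ fᵢ(y) log₂( f^q(y) / (fᵢ(y) qᵢ) ) dy`;
`g2Fun M f p p` is `g₂(p)` and `g2Fun M f p p̂` is the surrogate `g₂'(p, p̂)`. -/
noncomputable def g2Fun (M : ℕ) (f : ℕ → ℝ → ℝ) (p q : ℕ → ℝ) : ℝ :=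
  ∑ i ∈ Finset.Icc 1 M,
    p i * ∫ y : ℝ, f i y * Real.logb 2 (outMix M f q y / (f i y * q i))

open Finset Real ProbabilityTheory

/-! Pointwise, `log (f^p̂ / (fᵢ p̂ᵢ)) - log (f^p / (fᵢ pᵢ)) = log (f^p̂ / f^p) + log (pᵢ / p̂ᵢ)`.
Averaging against `pᵢ fᵢ`, the second term integrates to `D(p ‖ p̂)` because `∫ fᵢ = 1`, and the
first to `-D(f^p ‖ f^p̂)` because `∑ pᵢ fᵢ = f^p`. The only analytic input is integrability, which
holds for any probability densities: `0 ≤ fᵢ log (f^q / (qᵢ fᵢ)) ≤ f^q / qᵢ` by `log x ≤ x`. -/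

lemma logb_div_mul_sub_logb_div_mul {b x y c d e : ℝ} (hx : x ≠ 0) (hy : y ≠ 0) (hc : c ≠ 0)
    (hd : d ≠ 0) (he : e ≠ 0) :
    logb b (y / (c * e)) - logb b (x / (c * d)) = logb b (y / x) + logb b (d / e) := by
  rw [logb_div hy (mul_ne_zero hc he), logb_div hx (mul_ne_zero hc hd), logb_div hy hx,
    logb_div hd he, logb_mul hc he, logb_mul hc hd]
  ring

lemma mul_logb_div_mul_sub_mul_logb_div_mul {b x y c d e : ℝ} (hc : 0 ≤ c) (hd : 0 < d)
    (he : 0 < e) (hx : d * c ≤ x) (hy : e * c ≤ y) :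
    c * logb b (y / (c * e)) - c * logb b (x / (c * d))
      = c * logb b (y / x) + logb b (d / e) * c := by
  rcases hc.eq_or_lt with rfl | hc
  · simp
  have hx₀ : 0 < x := (mul_pos hd hc).trans_le hx
  have hy₀ : 0 < y := (mul_pos he hc).trans_le hy
  rw [← mul_sub, logb_div_mul_sub_logb_div_mul hx₀.ne' hy₀.ne' hc.ne' hd.ne' he.ne']
  ring

lemma abs_mul_logb_div_mul_le {b x c d : ℝ} (hb : 1 < b) (hc : 0 ≤ c) (hd : 0 < d)
    (hx : d * c ≤ x) : |c * logb b (x / (c * d))| ≤ x / (d * log b) := by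
  have hlogb : 0 < log b := log_pos hb
  rcases hc.eq_or_lt with rfl | hc
  · simp only [mul_zero, zero_mul, abs_zero] at hx ⊢
    exact div_nonneg hx (by positivity)
  have hratio : 1 ≤ x / (c * d) := by
    rw [one_le_div (by positivity)]
    linarith
  rw [abs_of_nonneg (mul_nonneg hc.le (logb_nonneg hb hratio))]
  calc c * logb b (x / (c * d)) = c * log (x / (c * d)) / log b := by rw [logb, mul_div_assoc]
    _ ≤ c * (x / (c * d)) / log b := by gcongr; exact log_le_self (by positivity)
    _ = x / (d * log b) := by field_simp

section OutMix

variable {M : ℕ} {f : ℕ → ℝ → ℝ} {q : ℕ → ℝ} {μ : Measure ℝ}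

lemma mul_le_outMix (hf : ∀ j ∈ Icc 1 M, ∀ y, 0 ≤ f j y) (hq : ∀ j ∈ Icc 1 M, 0 ≤ q j)
    {i : ℕ} (hi : i ∈ Icc 1 M) (y : ℝ) : q i * f i y ≤ outMix M f q y :=
  single_le_sum (fun j hj => mul_nonneg (hq j hj) (hf j hj y)) hi

lemma integrable_outMix (hf : ∀ j ∈ Icc 1 M, Integrable (f j) μ) :
    Integrable (outMix M f q) μ :=
  integrable_finsetSum _ fun j hj => (hf j hj).const_mul (q j)

lemma integral_outMix_mul {g : ℝ → ℝ} (hfg : ∀ j ∈ Icc 1 M, Integrable (fun y => f j y * g y) μ) :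
    ∫ y, outMix M f q y * g y ∂μ = ∑ j ∈ Icc 1 M, q j * ∫ y, f j y * g y ∂μ := by
  simp only [outMix, sum_mul, mul_assoc]
  rw [integral_finsetSum _ fun j hj => (hfg j hj).const_mul (q j)]
  simp only [integral_const_mul]

lemma integrable_mul_logb_outMix_div (hf : ∀ j ∈ Icc 1 M, ∀ y, 0 ≤ f j y)
    (hfi : ∀ j ∈ Icc 1 M, Integrable (f j) μ) (hq : ∀ j ∈ Icc 1 M, 0 ≤ q j) {i : ℕ}
    (hi : i ∈ Icc 1 M) (hqi : 0 < q i) :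
    Integrable (fun y => f i y * logb 2 (outMix M f q y / (f i y * q i))) μ := by
  have hmix := integrable_outMix (q := q) hfi
  have hfi_meas := (hfi i hi).aemeasurable
  have hmeas : AEMeasurable (fun y => f i y * logb 2 (outMix M f q y / (f i y * q i))) μ :=
    hfi_meas.mul ((hmix.aemeasurable.div (hfi_meas.mul_const _)).log.div_const _)
  refine (hmix.div_const (q i * log 2)).mono' hmeas.aestronglyMeasurable
    (ae_of_all _ fun y => ?_)
  rw [norm_eq_abs]
  exact abs_mul_logb_div_mul_le one_lt_two (hf i hi y) hqi (mul_le_outMix hf hq hi y)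

end OutMix

section Gap

variable {M : ℕ} {f : ℕ → ℝ → ℝ} {p phat : ℕ → ℝ}

lemma mul_logb_sub_mul_logb_eq (hf : ∀ j ∈ Icc 1 M, ∀ y, 0 ≤ f j y)
    (hp : ∀ j ∈ Icc 1 M, 0 < p j) (hphat : ∀ j ∈ Icc 1 M, 0 < phat j) {i : ℕ}
    (hi : i ∈ Icc 1 M) (y : ℝ) :
    f i y * logb 2 (outMix M f phat y / (f i y * phat i))
        - f i y * logb 2 (outMix M f p y / (f i y * p i))
      = f i y * logb 2 (outMix M f phat y / outMix M f p y)
        + logb 2 (p i / phat i) * f i y :=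
  mul_logb_div_mul_sub_mul_logb_div_mul (hf i hi y) (hp i hi) (hphat i hi)
    (mul_le_outMix hf (fun j hj => (hp j hj).le) hi y)
    (mul_le_outMix hf (fun j hj => (hphat j hj).le) hi y)

lemma integrable_mul_logb_outMix_div_outMix (hf : ∀ j ∈ Icc 1 M, ∀ y, 0 ≤ f j y)
    (hfi : ∀ j ∈ Icc 1 M, Integrable (f j)) (hp : ∀ j ∈ Icc 1 M, 0 < p j)
    (hphat : ∀ j ∈ Icc 1 M, 0 < phat j) {i : ℕ} (hi : i ∈ Icc 1 M) :
    Integrable (fun y => f i y * logb 2 (outMix M f phat y / outMix M f p y)) := by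
  have hA := integrable_mul_logb_outMix_div hf hfi (fun j hj => (hphat j hj).le) hi (hphat i hi)
  have hB := integrable_mul_logb_outMix_div hf hfi (fun j hj => (hp j hj).le) hi (hp i hi)
  refine ((hA.sub hB).sub ((hfi i hi).const_mul (logb 2 (p i / phat i)))).congr
    (ae_of_all _ fun y => ?_)
  simp only [Pi.sub_apply, mul_logb_sub_mul_logb_eq hf hp hphat hi y]
  ring

lemma integral_mul_logb_sub_integral_mul_logb (hf : ∀ j ∈ Icc 1 M, ∀ y, 0 ≤ f j y)
    (hf1 : ∀ j ∈ Icc 1 M, ∫ y, f j y = 1) (hp : ∀ j ∈ Icc 1 M, 0 < p j)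
    (hphat : ∀ j ∈ Icc 1 M, 0 < phat j) {i : ℕ} (hi : i ∈ Icc 1 M) :
    (∫ y, f i y * logb 2 (outMix M f phat y / (f i y * phat i)))
        - ∫ y, f i y * logb 2 (outMix M f p y / (f i y * p i))
      = (∫ y, f i y * logb 2 (outMix M f phat y / outMix M f p y))
        + logb 2 (p i / phat i) := by
  have hfi : ∀ j ∈ Icc 1 M, Integrable (f j) :=
    fun j hj => .of_integral_ne_zero (by simp [hf1 j hj])
  rw [← integral_sub
      (integrable_mul_logb_outMix_div hf hfi (fun j hj => (hphat j hj).le) hi (hphat i hi))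
      (integrable_mul_logb_outMix_div hf hfi (fun j hj => (hp j hj).le) hi (hp i hi)),
    integral_congr_ae (ae_of_all _ (mul_logb_sub_mul_logb_eq hf hp hphat hi)),
    integral_add (integrable_mul_logb_outMix_div_outMix hf hfi hp hphat hi)
      ((hfi i hi).const_mul _),
    integral_const_mul, hf1 i hi, mul_one]

theorem g2Fun_sub_g2Fun (hf : ∀ j ∈ Icc 1 M, ∀ y, 0 ≤ f j y)
    (hf1 : ∀ j ∈ Icc 1 M, ∫ y, f j y = 1) (hp : ∀ j ∈ Icc 1 M, 0 < p j)
    (hphat : ∀ j ∈ Icc 1 M, 0 < phat j) :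
    g2Fun M f p phat - g2Fun M f p p
      = (∑ i ∈ Icc 1 M, p i * logb 2 (p i / phat i))
        - ∫ y, outMix M f p y * logb 2 (outMix M f p y / outMix M f phat y) := by
  have hfi : ∀ j ∈ Icc 1 M, Integrable (f j) :=
    fun j hj => .of_integral_ne_zero (by simp [hf1 j hj])
  calc g2Fun M f p phat - g2Fun M f p p
      = ∑ i ∈ Icc 1 M, (p i * logb 2 (p i / phat i)
          + p i * ∫ y, f i y * logb 2 (outMix M f phat y / outMix M f p y)) := by
        simp only [g2Fun, ← sum_sub_distrib, ← mul_sub]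
        refine sum_congr rfl fun i hi => ?_
        rw [integral_mul_logb_sub_integral_mul_logb hf hf1 hp hphat hi]
        ring
    _ = (∑ i ∈ Icc 1 M, p i * logb 2 (p i / phat i))
          + ∫ y, outMix M f p y * logb 2 (outMix M f phat y / outMix M f p y) := by
        rw [sum_add_distrib,
          integral_outMix_mul fun j hj => integrable_mul_logb_outMix_div_outMix hf hfi hp hphat hj]
    _ = _ := by
        rw [sub_eq_add_neg, ← integral_neg]
        simp only [← inv_div (outMix M f p _), logb_inv, mul_neg]

end Gap

lemma condDensity_eq_sum_gaussianPDFReal (σ h α Δ : ℝ) (K : ℕ) (w b : ℕ → ℝ) (i : ℕ) (y : ℝ) :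
    condDensity σ h α Δ K w b i y
      = ∑ k ∈ Icc 1 K, w k * gaussianPDFReal (h * α * Δ * i + b k) (σ ^ 2).toNNReal y := by
  refine sum_congr rfl fun k _ => ?_
  rw [gaussianPDFReal_def, coe_toNNReal _ (sq_nonneg σ), sqrt_eq_rpow,
    ← rpow_neg (by positivity), mul_assoc]
  ring_nf

lemma condDensity_nonneg {σ h α Δ : ℝ} {K : ℕ} {w b : ℕ → ℝ}
    (hw : ∀ k ∈ Icc 1 K, 0 ≤ w k) (i : ℕ) (y : ℝ) : 0 ≤ condDensity σ h α Δ K w b i y := by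
  rw [condDensity_eq_sum_gaussianPDFReal]
  exact sum_nonneg fun k hk => mul_nonneg (hw k hk) (gaussianPDFReal_nonneg _ _ _)

lemma integral_condDensity {σ h α Δ : ℝ} {K : ℕ} {w b : ℕ → ℝ} (hσ : σ ≠ 0)
    (hwsum : ∑ k ∈ Icc 1 K, w k = 1) (i : ℕ) : ∫ y, condDensity σ h α Δ K w b i y = 1 := by
  have hv : (σ ^ 2).toNNReal ≠ 0 := (toNNReal_pos.mpr (by positivity)).ne'
  simp only [condDensity_eq_sum_gaussianPDFReal]
  rw [integral_finsetSum _ fun k _ => (integrable_gaussianPDFReal _ _).const_mul _]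
  simp only [integral_const_mul, integral_gaussianPDFReal_eq_one _ hv, mul_one, hwsum]

theorem surrogate_gap_identity_general
    (M : ℕ) (σ h α Δ : ℝ)
    (hσ : 0 < σ)
    (K : ℕ) (w b : ℕ → ℝ)
    (hw : ∀ k ∈ Finset.Icc 1 K, 0 ≤ w k)
    (hwsum : ∑ k ∈ Finset.Icc 1 K, w k = 1)
    (p phat : ℕ → ℝ)
    (hp : ∀ i ∈ Finset.Icc 1 M, 0 < p i)
    (hphat : ∀ i ∈ Finset.Icc 1 M, 0 < phat i)
    (f : ℕ → ℝ → ℝ) (hf : f = condDensity σ h α Δ K w b) :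
    g2Fun M f p phat - g2Fun M f p p
      = (∑ i ∈ Finset.Icc 1 M, p i * Real.logb 2 (p i / phat i))
        - ∫ y : ℝ,
            outMix M f p y * Real.logb 2 (outMix M f p y / outMix M f phat y) := by
  subst hf
  exact g2Fun_sub_g2Fun (fun i _ => condDensity_nonneg hw i)
    (fun i _ => integral_condDensity hσ.ne' hwsum i) hp hphat

/-- **Surrogate-gap identity.** The gap `g₂'(p, p̂) - g₂(p)` equals the relative entropy
between `p` and `p̂` minus the relative entropy between the corresponding output
mixture densities. -/
theorem surrogate_gap_identity
    (M : ℕ) (hM : 1 ≤ M) (σ h α Δ : ℝ)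
    (hσ : 0 < σ) (hh : 0 < h) (hα : 0 < α) (hΔ : 0 < Δ)
    (K : ℕ) (hK : 1 ≤ K) (w b : ℕ → ℝ)
    (hw : ∀ k ∈ Finset.Icc 1 K, 0 ≤ w k)
    (hwsum : ∑ k ∈ Finset.Icc 1 K, w k = 1)
    (p phat : ℕ → ℝ)
    (hp : ∀ i ∈ Finset.Icc 1 M, 0 < p i)
    (hpsum : ∑ i ∈ Finset.Icc 1 M, p i = 1)
    (hphat : ∀ i ∈ Finset.Icc 1 M, 0 < phat i)
    (hphatsum : ∑ i ∈ Finset.Icc 1 M, phat i = 1)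
    (f : ℕ → ℝ → ℝ) (hf : f = condDensity σ h α Δ K w b) :
    g2Fun M f p phat - g2Fun M f p p
      = (∑ i ∈ Finset.Icc 1 M, p i * Real.logb 2 (p i / phat i))
        - ∫ y : ℝ,
            outMix M f p y * Real.logb 2 (outMix M f p y / outMix M f phat y) :=
  surrogate_gap_identity_general M σ h α Δ hσ K w b hw hwsum p phat hp hphat f hf
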